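/- Let ℓ ≥ 1 and define the ℓ×ℓ matrix Ω by Ω_{i,j} = 2cos(2π(i−1)(2j−1)/(4ℓ)) for 1 ≤ i,j ≤ ℓ. Then (det Ω)² = 2·(2ℓ)^ℓ. -/

import Mathlib

open Real Finset Matrix

/-!
With 0-based indices, Ω has entries `2 cos((2j+1) · iπ/(2ℓ))`. By product-to-sum, each entry of
ΩΩᵀ is a combination of sums `∑_{j<ℓ} cos((2j+1) · mπ/(2ℓ))`. Multiplied by `2 sin(mπ/(2ℓ))`, such
a sum telescopes to `sin(mπ) = 0`, so it vanishes unless `2ℓ ∣ m`. Hence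
ΩΩᵀ = diag(4ℓ, 2ℓ, …, 2ℓ), and (det Ω)² = 4ℓ · (2ℓ)^(ℓ-1).
-/

theorem two_mul_sin_mul_sum_range_cos_odd_mul (x : ℝ) (n : ℕ) :
    2 * sin x * ∑ j ∈ range n, cos ((2 * j + 1) * x) = sin (2 * n * x) := by
  induction n with
  | zero => simp
  | succ n ih =>
    rw [sum_range_succ, mul_add, ih, two_mul_sin_mul_cos, ← neg_neg (x - _), sin_neg]
    push_cast
    ring_nf

theorem sum_range_cos_odd_mul_eq_zero {ℓ : ℕ} {m : ℤ} (hm : ¬ (2 * ℓ : ℤ) ∣ m) :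
    ∑ j ∈ range ℓ, cos ((2 * j + 1) * (m * π / (2 * ℓ))) = 0 := by
  rcases ℓ.eq_zero_or_pos with rfl | hℓ
  · simp
  have hsin : sin (m * π / (2 * ℓ)) ≠ 0 := by
    rintro hzero
    obtain ⟨n, hn⟩ := sin_eq_zero_iff.mp hzero
    refine hm ⟨n, ?_⟩
    have : (m : ℝ) = 2 * ℓ * n := by
      field_simp at hn
      linarith
    exact_mod_cast this
  have htelescope := two_mul_sin_mul_sum_range_cos_odd_mul (m * π / (2 * ℓ)) ℓ
  rw [show 2 * (ℓ : ℝ) * (m * π / (2 * ℓ)) = m * π by field_simp, sin_int_mul_pi] at htelescope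
  simpa [hsin] using htelescope

noncomputable def cosMatrix (ℓ : ℕ) : Matrix (Fin ℓ) (Fin ℓ) ℝ :=
  of fun i j => 2 * cos ((2 * j + 1) * (i * π / (2 * ℓ)))

theorem cosMatrix_mul_transpose_apply {ℓ : ℕ} (i k : Fin ℓ) :
    (cosMatrix ℓ * (cosMatrix ℓ)ᵀ) i k =
      2 * (∑ j ∈ range ℓ, cos ((2 * j + 1) * (((i - k : ℤ) : ℝ) * π / (2 * ℓ))) +
        ∑ j ∈ range ℓ, cos ((2 * j + 1) * (((i + k : ℤ) : ℝ) * π / (2 * ℓ)))) := by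
  rw [mul_apply, ← sum_add_distrib, mul_sum, ← Fin.sum_univ_eq_sum_range]
  refine sum_congr rfl fun j _ => ?_
  simp only [cosMatrix, transpose_apply, of_apply]
  rw [show ∀ x y : ℝ, 2 * cos x * (2 * cos y) = 2 * (2 * cos x * cos y) from fun _ _ => by ring,
    two_mul_cos_mul_cos]
  push_cast
  ring_nf

theorem cosMatrix_mul_transpose (ℓ : ℕ) :
    cosMatrix ℓ * (cosMatrix ℓ)ᵀ =
      diagonal fun i : Fin ℓ => if (i : ℕ) = 0 then 4 * (ℓ : ℝ) else 2 * ℓ := by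
  have hvanish : ∀ m : ℤ, m ≠ 0 → |m| < 2 * ℓ →
      ∑ j ∈ range ℓ, cos ((2 * j + 1) * ((m : ℝ) * π / (2 * ℓ))) = 0 :=
    fun m hm0 hm => sum_range_cos_odd_mul_eq_zero fun hdvd =>
      hm0 (Int.eq_zero_of_abs_lt_dvd hdvd hm)
  have hconst : ∑ j ∈ range ℓ, cos ((2 * j + 1) * (((0 : ℤ) : ℝ) * π / (2 * ℓ))) = ℓ := by simp
  ext i k
  have hi := i.isLt
  have hk := k.isLt
  rw [cosMatrix_mul_transpose_apply, diagonal_apply]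
  by_cases hik : i = k
  · subst hik
    rw [if_pos rfl, sub_self, hconst]
    split_ifs with hi0
    · rw [hi0, Nat.cast_zero, add_zero, hconst]
      ring
    · rw [hvanish _ (by omega) (abs_lt.mpr ⟨by omega, by omega⟩)]
      ring
  · have hik' : (i : ℕ) ≠ k := Fin.val_ne_of_ne hik
    rw [if_neg hik, hvanish _ (by omega) (abs_lt.mpr ⟨by omega, by omega⟩),
      hvanish _ (by omega) (abs_lt.mpr ⟨by omega, by omega⟩)]
    ring

theorem det_cosMatrix_sq {ℓ : ℕ} (hℓ : 1 ≤ ℓ) : (cosMatrix ℓ).det ^ 2 = 2 * (2 * ℓ : ℝ) ^ ℓ := by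
  obtain ⟨n, rfl⟩ := Nat.exists_eq_add_of_le' hℓ
  have hgram := congrArg det (cosMatrix_mul_transpose (n + 1))
  rw [det_mul, det_transpose] at hgram
  rw [sq, hgram, det_diagonal, Fin.prod_univ_succ]
  simp only [Fin.val_zero, if_true, Fin.val_succ, Nat.succ_ne_zero, if_false, prod_const,
    card_univ, Fintype.card_fin]
  push_cast
  ring

theorem stmt_8 (ℓ : ℕ) (hℓ : 1 ≤ ℓ)
    (Ω : Matrix (Fin ℓ) (Fin ℓ) ℝ)
    (hΩ : ∀ i j, Ω i j = 2 * Real.cos (2 * π * i.val * (2 * j.val + 1) / (4 * ℓ))) :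
    (Ω.det) ^ 2 = 2 * (2 * ℓ : ℝ) ^ ℓ := by
  have hΩ_eq : Ω = cosMatrix ℓ := by
    ext i j
    rw [hΩ, cosMatrix, of_apply]
    congr 2
    ring
  rw [hΩ_eq, det_cosMatrix_sq hℓ]
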